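/- arXiv:1405.0640 — 6 statements merged into one kernel-verified Lean document; each statement's English description precedes it below -/
import Mathlib

section
/- Let V : [a,b] → ℝ be nondecreasing with V' ≥ F(V) almost everywhere on [a,b], where F : ℝ → ℝ is nondecreasing and continuously differentiable. Let Y be a C² function on [a,b] satisfying Y' = F(Y) and Y(a) ≤ V(a). Then Y ≤ V on [a,b]. -/
/-!
Set `h = (Y - V)⁺`. For monotone `V` one has `∫ₐᵗ V' ≤ V t - V a` even when `V` jumps, so
integrating `Y' = F(Y)` and `V' ≥ F(V)` gives `Y t - V t ≤ ∫ₐᵗ (F(Y) - F(V))`. Since `F` is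
monotone and Lipschitz on a compact set containing the values of `Y` and `V`, the integrand is
at most `L h`; hence `h t ≤ L ∫ₐᵗ h`, and Grönwall's inequality forces `h = 0`.
-/

open MeasureTheory Set Topology
open scoped NNReal

theorem eq_zero_of_le_mul_integral_of_continuousOn {f : ℝ → ℝ} {K a b : ℝ}
    (hf : ContinuousOn f (Icc a b)) (hf₀ : ∀ t ∈ Icc a b, 0 ≤ f t)
    (hle : ∀ t ∈ Icc a b, f t ≤ K * ∫ x in a..t, f x) :
    ∀ t ∈ Icc a b, f t = 0 := by
  intro t ht
  have hab : a ≤ b := ht.1.trans ht.2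
  have hint : IntegrableOn f (uIcc a b) := by
    rw [uIcc_of_le hab]; exact hf.integrableOn_Icc
  have hP₀ : ∀ s ∈ Icc a b, 0 ≤ ∫ x in a..s, f x := fun s hs =>
    intervalIntegral.integral_nonneg hs.1 fun x hx => hf₀ x ⟨hx.1, hx.2.trans hs.2⟩
  have hP : ∀ s ∈ Icc a b, ∫ x in a..s, f x = 0 := by
    refine eq_zero_of_abs_deriv_le_mul_abs_self_of_eq_zero_right (f' := f) (K := K) ?_ ?_
      intervalIntegral.integral_same ?_
    · simpa [uIcc_of_le hab] using intervalIntegral.continuousOn_primitive_interval hint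
    · intro s hs
      have hsb : Icc a b ∈ 𝓝[>] s :=
        nhdsWithin_mono _ Ioi_subset_Ici_self (Icc_mem_nhdsGE_of_mem hs)
      have hsub : uIcc a s ⊆ uIcc a b :=
        uIcc_subset_uIcc_left (by simp [uIcc_of_le hab, hs.1, hs.2.le])
      exact intervalIntegral.integral_hasDerivWithinAt_right (hint.mono_set hsub).intervalIntegrable
        ((hf.stronglyMeasurableAtFilter_nhdsWithin measurableSet_Icc s).filter_mono
          (nhdsWithin_le_of_mem hsb))
        ((hf s (Ico_subset_Icc_self hs)).mono_of_mem_nhdsWithin hsb)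
    · intro s hs
      have hs' := Ico_subset_Icc_self hs
      rw [Real.norm_of_nonneg (hf₀ s hs'), Real.norm_of_nonneg (hP₀ s hs')]
      exact hle s hs'
  exact le_antisymm (by simpa [hP t ht] using hle t ht) (hf₀ t ht)

theorem eq_zero_of_le_mul_integral {f : ℝ → ℝ} {K a b : ℝ}
    (hf : IntegrableOn f (Icc a b)) (hf₀ : ∀ t ∈ Icc a b, 0 ≤ f t)
    (hle : ∀ t ∈ Icc a b, f t ≤ K * ∫ x in a..t, f x) :
    ∀ t ∈ Icc a b, f t = 0 := by
  intro t ht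
  have hab : a ≤ b := ht.1.trans ht.2
  have hPcont : ContinuousOn (fun s => ∫ x in a..s, f x) (Icc a b) := by
    have := intervalIntegral.continuousOn_primitive_interval (f := f) (μ := volume)
      (by rwa [uIcc_of_le hab])
    rwa [uIcc_of_le hab] at this
  have hP₀ : ∀ s ∈ Icc a b, 0 ≤ ∫ x in a..s, f x := fun s hs =>
    intervalIntegral.integral_nonneg hs.1 fun x hx => hf₀ x ⟨hx.1, hx.2.trans hs.2⟩
  have hP : ∀ s ∈ Icc a b, ∫ x in a..s, f x = 0 := by
    refine eq_zero_of_le_mul_integral_of_continuousOn (K := K) hPcont hP₀ fun s hs => ?_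
    have hsub : Icc a s ⊆ Icc a b := Icc_subset_Icc_right hs.2
    calc ∫ x in a..s, f x ≤ ∫ x in a..s, K * ∫ y in a..x, f y :=
          intervalIntegral.integral_mono_on hs.1
            ((intervalIntegrable_iff_integrableOn_Icc_of_le hs.1).2 (hf.mono_set hsub))
            (((hPcont.mono hsub).intervalIntegrable_of_Icc hs.1).const_mul K)
            fun x hx => hle x (hsub hx)
      _ = K * ∫ x in a..s, ∫ y in a..x, f y := intervalIntegral.integral_const_mul _ _
  exact le_antisymm (by simpa [hP t ht] using hle t ht) (hf₀ t ht)

theorem LipschitzOnWith.sub_le_mul_posPart_of_monotone {f : ℝ → ℝ} {K : ℝ≥0} {s : Set ℝ}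
    (hf : LipschitzOnWith K f s) (hmono : Monotone f) {x y : ℝ} (hx : x ∈ s) (hy : y ∈ s) :
    f x - f y ≤ K * (x - y)⁺ := by
  rcases le_total x y with hxy | hyx
  · linarith [hmono hxy, mul_nonneg K.coe_nonneg (posPart_nonneg (x - y))]
  · rw [posPart_eq_self.2 (sub_nonneg.2 hyx)]
    calc f x - f y ≤ dist (f x) (f y) := le_abs_self _
      _ ≤ K * dist x y := hf.dist_le_mul x hx y hy
      _ = K * (x - y) := by rw [Real.dist_eq, abs_of_nonneg (sub_nonneg.2 hyx)]

theorem sub_le_mul_integral_posPart_sub {F V Y : ℝ → ℝ} {K a b : ℝ}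
    (hVmono : MonotoneOn V (Icc a b))
    (hV' : ∀ᵐ t ∂(volume.restrict (Icc a b)), F (V t) ≤ deriv V t)
    (hF : Continuous F) (hYode : ∀ t ∈ Icc a b, HasDerivAt Y (F (Y t)) t) (hYa : Y a ≤ V a)
    (hFK : ∀ t ∈ Icc a b, F (Y t) - F (V t) ≤ K * (Y t - V t)⁺)
    (hint : IntegrableOn (fun t => (Y t - V t)⁺) (Icc a b)) :
    ∀ t ∈ Icc a b, Y t - V t ≤ K * ∫ x in a..t, (Y x - V x)⁺ := by
  intro t ht
  have hsub : Icc a t ⊆ Icc a b := Icc_subset_Icc_right ht.2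
  have hVmono' : MonotoneOn V (uIcc a t) := hVmono.mono (by rwa [uIcc_of_le ht.1])
  have hFY : IntervalIntegrable (fun x => F (Y x)) volume a t :=
    (hF.comp_continuousOn fun x hx => (hYode x (hsub hx)).continuousAt.continuousWithinAt
      ).intervalIntegrable_of_Icc ht.1
  have hV'int : IntervalIntegrable (deriv V) volume a t := hVmono'.intervalIntegrable_deriv
  have hYinc : ∫ x in a..t, F (Y x) = Y t - Y a :=
    intervalIntegral.integral_eq_sub_of_hasDerivAt
      (fun x hx => hYode x (hsub (by rwa [uIcc_of_le ht.1] at hx))) hFY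
  have hVinc : ∫ x in a..t, deriv V x ≤ V t - V a := by
    have := hVmono'.intervalIntegral_deriv_mem_uIcc
    rw [uIcc_of_le (sub_nonneg.2 (hVmono ⟨le_rfl, ht.1.trans ht.2⟩ ht ht.1))] at this
    exact this.2
  calc Y t - V t ≤ (∫ x in a..t, F (Y x)) - ∫ x in a..t, deriv V x := by linarith
    _ = ∫ x in a..t, (F (Y x) - deriv V x) := (intervalIntegral.integral_sub hFY hV'int).symm
    _ ≤ ∫ x in a..t, K * (Y x - V x)⁺ := by
        have hKh : IntervalIntegrable (fun x => K * (Y x - V x)⁺) volume a t :=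
          ((intervalIntegrable_iff_integrableOn_Icc_of_le ht.1).2 (hint.mono_set hsub)).const_mul K
        refine intervalIntegral.integral_mono_ae_restrict ht.1 (hFY.sub hV'int) hKh ?_
        filter_upwards [ae_restrict_of_ae_restrict_of_subset hsub hV',
          ae_restrict_mem measurableSet_Icc] with x hx hxI
        linarith [hFK x (hsub hxI)]
    _ = K * ∫ x in a..t, (Y x - V x)⁺ := intervalIntegral.integral_const_mul _ _

theorem ode_comparison_general (a b : ℝ) (V F Y : ℝ → ℝ)
    (hVmono : MonotoneOn V (Icc a b))
    (hV' : ∀ᵐ t ∂(volume.restrict (Icc a b)), ∃ v : ℝ, HasDerivAt V v t ∧ F (V t) ≤ v)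
    (hFmono : Monotone F) (hF : ContDiff ℝ 1 F)
    (hYode : ∀ t ∈ Icc a b, HasDerivAt Y (F (Y t)) t)
    (hYa : Y a ≤ V a) :
    ∀ t ∈ Icc a b, Y t ≤ V t := by
  have hYc : ContinuousOn Y (Icc a b) := fun t ht => (hYode t ht).continuousAt.continuousWithinAt
  obtain ⟨L, hL⟩ : ∃ L, LipschitzOnWith L F (Y '' Icc a b ∪ Icc (V a) (V b)) :=
    hF.locallyLipschitz.locallyLipschitzOn.exists_lipschitzOnWith_of_compact
      ((isCompact_Icc.image_of_continuousOn hYc).union isCompact_Icc)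
  have hFL : ∀ t ∈ Icc a b, F (Y t) - F (V t) ≤ L * (Y t - V t)⁺ := fun t ht =>
    hL.sub_le_mul_posPart_of_monotone hFmono (Or.inl (mem_image_of_mem Y ht))
      (Or.inr ⟨hVmono ⟨le_rfl, ht.1.trans ht.2⟩ ht ht.1,
        hVmono ht ⟨ht.1.trans ht.2, le_rfl⟩ ht.2⟩)
  have hint : IntegrableOn (fun t => (Y t - V t)⁺) (Icc a b) :=
    (hYc.integrableOn_Icc.sub (hVmono.integrableOn_isCompact isCompact_Icc)).pos_part
  have hkey := sub_le_mul_integral_posPart_sub hVmono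
    (hV'.mono fun t ⟨v, hv, hFv⟩ => hv.deriv ▸ hFv) hF.continuous hYode hYa hFL hint
  have hzero := eq_zero_of_le_mul_integral hint (fun t _ => posPart_nonneg _) fun t ht =>
    sup_le (hkey t ht) (mul_nonneg L.coe_nonneg
      (intervalIntegral.integral_nonneg ht.1 fun x _ => posPart_nonneg _))
  exact fun t ht => sub_nonpos.1 (posPart_eq_zero.1 (hzero t ht))

/-- ODE comparison lemma for rough solutions: if `V` is nondecreasing on `[a,b]` and
satisfies `V' ≥ F(V)` almost everywhere, `F` is nondecreasing and `C¹`, and `Y` is a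
`C²` solution of `Y' = F(Y)` with `Y a ≤ V a`, then `Y ≤ V` on `[a,b]`. -/
theorem ode_comparison (a b : ℝ) (hab : a ≤ b) (V F Y : ℝ → ℝ)
    (hVmono : MonotoneOn V (Icc a b))
    (hV' : ∀ᵐ t ∂(volume.restrict (Icc a b)), ∃ v : ℝ, HasDerivAt V v t ∧ F (V t) ≤ v)
    (hFmono : Monotone F) (hF : ContDiff ℝ 1 F)
    (hY : ContDiffOn ℝ 2 Y (Icc a b))
    (hYode : ∀ t ∈ Icc a b, HasDerivAt Y (F (Y t)) t)
    (hYa : Y a ≤ V a) :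
    ∀ t ∈ Icc a b, Y t ≤ V t :=
  ode_comparison_general a b V F Y hVmono hV' hFmono hF hYode hYa
end

section
/- For every ε > 0, if Y_ε is the C² solution of Y_ε' = F(Y_ε) with Y_ε(a) = Y(a) − ε, where F is nondecreasing and C¹, and V is nondecreasing with V' ≥ F(V) almost everywhere and Y(a) ≤ V(a), then Y_ε(t) < V(t) for all t ∈ [a,b]. -/
open MeasureTheory Set Filter Topology

/-!
Let `c` be the first point of `[a, b]` at which `Yε` reaches `V`; it exists because `Yε` is
continuous and `V` is nondecreasing, so the contact set contains its infimum. On `[a, c)` we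
have `Yε < V`, hence `Yε' = F(Yε) ≤ F(V) ≤ V'` almost everywhere. Since the derivative of a
monotone function integrates to at most its increment, `Yε c - Yε a ≤ V c - V a`, i.e.
`Yε c ≤ V c - (V a - Y a) - ε < V c`, contradicting the choice of `c`.
-/

theorem MonotoneOn.intervalIntegral_le_sub_of_ae_le_deriv {V g : ℝ → ℝ} {a c : ℝ}
    (hac : a ≤ c) (hV : MonotoneOn V (Icc a c)) (hg : IntervalIntegrable g volume a c)
    (hgV : ∀ᵐ t ∂volume.restrict (Icc a c), g t ≤ deriv V t) :
    ∫ t in a..c, g t ≤ V c - V a := by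
  have hV' : MonotoneOn V (uIcc a c) := by rwa [uIcc_of_le hac]
  calc ∫ t in a..c, g t ≤ ∫ t in a..c, deriv V t :=
        intervalIntegral.integral_mono_ae_restrict hac hg hV'.intervalIntegrable_deriv hgV
    _ ≤ V c - V a := by
        have h := hV'.intervalIntegral_deriv_mem_uIcc
        rw [uIcc_of_le (sub_nonneg.2 (hV ⟨le_rfl, hac⟩ ⟨hac, le_rfl⟩ hac))] at h
        exact h.2

theorem ContinuousOn.exists_first_ge_of_monotoneOn {u V : ℝ → ℝ} {a b : ℝ}
    (hu : ContinuousOn u (Icc a b)) (hV : MonotoneOn V (Icc a b))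
    (h : ∃ t ∈ Icc a b, V t ≤ u t) :
    ∃ c ∈ Icc a b, V c ≤ u c ∧ ∀ t ∈ Ico a c, u t < V t := by
  set A := {t ∈ Icc a b | V t ≤ u t}
  obtain ⟨t₀, ht₀⟩ : A.Nonempty := h
  have hAbdd : BddBelow A := ⟨a, fun t ht => ht.1.1⟩
  have hc : sInf A ∈ Icc a b :=
    ⟨le_csInf ⟨t₀, ht₀⟩ fun t ht => ht.1.1, (csInf_le hAbdd ht₀).trans ht₀.1.2⟩
  refine ⟨sInf A, hc, ?_, fun t ht => ?_⟩
  · by_contra! hlt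
    have hnear : ∀ᶠ t in 𝓝[A] sInf A, u t < V (sInf A) :=
      ((hu _ hc).eventually (gt_mem_nhds hlt)).filter_mono (nhdsWithin_mono _ fun t ht => ht.1)
    have hcluster : (𝓝[A] sInf A).NeBot := mem_closure_iff_nhdsWithin_neBot.1 (csInf_mem_closure ⟨t₀, ht₀⟩ hAbdd)
    obtain ⟨t, htu, htA⟩ := (hnear.and self_mem_nhdsWithin).exists
    have hVt := hV hc htA.1 (csInf_le hAbdd htA)
    linarith [htA.2]
  · by_contra! hle
    exact (csInf_le hAbdd ⟨⟨ht.1, ht.2.le.trans hc.2⟩, hle⟩).not_gt ht.2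

theorem sub_le_sub_of_lt_supersolution {u V F : ℝ → ℝ} {a c : ℝ} (hac : a ≤ c)
    (hV : MonotoneOn V (Icc a c))
    (hV' : ∀ᵐ t ∂volume.restrict (Icc a c), ∃ v : ℝ, HasDerivAt V v t ∧ F (V t) ≤ v)
    (hFmono : Monotone F) (hF : Continuous F)
    (hu : ∀ t ∈ Icc a c, HasDerivAt u (F (u t)) t) (hlt : ∀ t ∈ Ico a c, u t < V t) :
    u c - u a ≤ V c - V a := by
  have hu' : ∀ t ∈ uIcc a c, HasDerivAt u (F (u t)) t := by rwa [uIcc_of_le hac]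
  have hint : IntervalIntegrable (fun t => F (u t)) volume a c :=
    (hF.comp_continuousOn fun t ht => (hu' t ht).continuousAt.continuousWithinAt).intervalIntegrable
  rw [← intervalIntegral.integral_eq_sub_of_hasDerivAt hu' hint]
  refine hV.intervalIntegral_le_sub_of_ae_le_deriv hac hint ?_
  rw [← restrict_Ico_eq_restrict_Icc] at hV' ⊢
  filter_upwards [hV', ae_restrict_mem measurableSet_Ico] with t ⟨v, hv, hFv⟩ ht
  rw [hv.deriv]
  exact (hFmono (hlt t ht).le).trans hFv

theorem ode_comparison_strict_general (a b : ℝ) (V F Y : ℝ → ℝ)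
    (hVmono : MonotoneOn V (Icc a b))
    (hV' : ∀ᵐ t ∂(volume.restrict (Icc a b)), ∃ v : ℝ, HasDerivAt V v t ∧ F (V t) ≤ v)
    (hFmono : Monotone F) (hF : ContDiff ℝ 1 F)
    (hYa : Y a ≤ V a)
    (ε : ℝ) (hε : 0 < ε) (Yε : ℝ → ℝ)
    (hYεode : ∀ t ∈ Icc a b, HasDerivAt Yε (F (Yε t)) t)
    (hYεa : Yε a = Y a - ε) :
    ∀ t ∈ Icc a b, Yε t < V t := by
  intro t ht
  by_contra! hle
  have hYεcont : ContinuousOn Yε (Icc a b) :=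
    fun s hs => (hYεode s hs).continuousAt.continuousWithinAt
  obtain ⟨c, hc, hVc, hbelow⟩ := hYεcont.exists_first_ge_of_monotoneOn hVmono ⟨t, ht, hle⟩
  have hsub : Icc a c ⊆ Icc a b := Icc_subset_Icc_right hc.2
  have hgain := sub_le_sub_of_lt_supersolution hc.1 (hVmono.mono hsub)
    (ae_restrict_of_ae_restrict_of_subset hsub hV') hFmono hF.continuous
    (fun s hs => hYεode s (hsub hs)) hbelow
  linarith

/-- Strict comparison with the downward-shifted solution: if `Yε` solves `Yε' = F(Yε)`
with `Yε a = Y a − ε`, where `F` is nondecreasing and `C¹`, `V` is nondecreasing with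
`V' ≥ F(V)` a.e. and `Y a ≤ V a`, then `Yε < V` on `[a,b]`. -/
theorem ode_comparison_strict (a b : ℝ) (hab : a ≤ b) (V F Y : ℝ → ℝ)
    (hVmono : MonotoneOn V (Icc a b))
    (hV' : ∀ᵐ t ∂(volume.restrict (Icc a b)), ∃ v : ℝ, HasDerivAt V v t ∧ F (V t) ≤ v)
    (hFmono : Monotone F) (hF : ContDiff ℝ 1 F)
    (hY : ContDiffOn ℝ 2 Y (Icc a b))
    (hYode : ∀ t ∈ Icc a b, HasDerivAt Y (F (Y t)) t)
    (hYa : Y a ≤ V a)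
    (ε : ℝ) (hε : 0 < ε) (Yε : ℝ → ℝ)
    (hYε : ContDiffOn ℝ 2 Yε (Icc a b))
    (hYεode : ∀ t ∈ Icc a b, HasDerivAt Yε (F (Yε t)) t)
    (hYεa : Yε a = Y a - ε) :
    ∀ t ∈ Icc a b, Yε t < V t :=
  ode_comparison_strict_general a b V F Y hVmono hV' hFmono hF hYa ε hε Yε hYεode hYεa
end

section
/- Let n = 3, α < 1/2, γ > 0, 1 < a < b, c > 0. There exists a constant C = C(γ, α, a, b, c) > 0 such that for every m > 0, if r₁ ≥ max(C·m^{−1/(1−2α)}, 2m), then γ·(c·r₁)^α < S_m(b·r₁) − S_m(a·r₁), where S_m(r) = √(8m(r − 2m)). -/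
set_option maxHeartbeats 1600000 in
/-- `n = 3` threshold radius lemma: for `α < 1/2`, `γ > 0`, `1 < a < b`, `c > 0`,
there is `C = C(γ,α,a,b,c) > 0` such that for every `m > 0`, if
`r₁ ≥ max(C·m^{−1/(1−2α)}, 2m)` then `γ(cr₁)^α < S_m(br₁) − S_m(ar₁)`,
where `S_m(r) = √(8m(r−2m))`. -/
theorem schwarzschild3_threshold (α γ a b c : ℝ) (hα : α < 1 / 2) (hγ : 0 < γ)
    (ha : 1 < a) (hab : a < b) (hc : 0 < c) :
    ∃ C > 0, ∀ m > 0, ∀ r₁ : ℝ,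
      max (C * m ^ (-(1 / (1 - 2 * α)))) (2 * m) ≤ r₁ →
      γ * (c * r₁) ^ α <
        Real.sqrt (8 * m * (b * r₁ - 2 * m)) - Real.sqrt (8 * m * (a * r₁ - 2 * m)) := by
  have hε : (0:ℝ) < 1 - 2*α := by linarith
  have hca : 0 < c ^ α := Real.rpow_pos_of_pos hc α
  have hb0 : (0:ℝ) < b := by linarith
  have hsb : 0 < Real.sqrt b := Real.sqrt_pos.mpr hb0
  set K := (b - a) * Real.sqrt 2 / Real.sqrt b with hK_def
  have hK : 0 < K := div_pos (mul_pos (by linarith) (Real.sqrt_pos.mpr two_pos)) hsb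
  have hKb : K * Real.sqrt b = (b - a) * Real.sqrt 2 := by
    rw [hK_def]; field_simp
  have hX : 0 < 2*γ*c^α/K := by positivity
  refine ⟨(2*γ*c^α/K) ^ ((2:ℝ)/(1-2*α)), Real.rpow_pos_of_pos hX _, ?_⟩
  intro m hm r₁ hr₁
  have h2m : 2*m ≤ r₁ := le_trans (le_max_right _ _) hr₁
  have hr₁0 : 0 < r₁ := lt_of_lt_of_le (by linarith) h2m
  have hrC : (2*γ*c^α/K) ^ ((2:ℝ)/(1-2*α)) * m ^ (-(1/(1-2*α))) ≤ r₁ :=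
    le_trans (le_max_left _ _) hr₁
  -- key : 2*γ*c^α ≤ K * m^(1/2) * r₁^((1-2α)/2)
  have key : 2*γ*c^α ≤ K * m ^ ((1:ℝ)/2) * r₁ ^ ((1-2*α)/2) := by
    have h1 : ((2*γ*c^α/K) ^ ((2:ℝ)/(1-2*α)) * m ^ (-(1/(1-2*α)))) ^ ((1-2*α)/2)
        ≤ r₁ ^ ((1-2*α)/2) :=
      Real.rpow_le_rpow (by positivity) hrC (by positivity)
    rw [Real.mul_rpow (by positivity) (by positivity),
      ← Real.rpow_mul hX.le, ← Real.rpow_mul hm.le] at h1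
    have e1 : (2:ℝ)/(1-2*α) * ((1-2*α)/2) = 1 := by field_simp
    have e2 : -(1/(1-2*α)) * ((1-2*α)/2) = -(1/2 : ℝ) := by field_simp
    rw [e1, e2, Real.rpow_one] at h1
    have h2 := mul_le_mul_of_nonneg_left h1 (le_of_lt (by positivity : (0:ℝ) < K * m ^ ((1:ℝ)/2)))
    have hmm : m ^ ((1:ℝ)/2) * m ^ (-(1/2:ℝ)) = 1 := by
      rw [← Real.rpow_add hm]; norm_num
    calc 2*γ*c^α = K * m ^ ((1:ℝ)/2) * (2*γ*c^α/K * m ^ (-(1/2:ℝ))) := by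
          have : K * m ^ ((1:ℝ)/2) * (2*γ*c^α/K * m ^ (-(1/2:ℝ)))
              = (2*γ*c^α) * (K/K) * (m ^ ((1:ℝ)/2) * m ^ (-(1/2:ℝ))) := by ring
          rw [this, div_self hK.ne', hmm]; ring
      _ ≤ K * m ^ ((1:ℝ)/2) * r₁ ^ ((1-2*α)/2) := h2
  -- geometric lower bound on the sqrt difference
  have hAm : 0 ≤ a*r₁ - 2*m := by linarith [mul_pos (show (0:ℝ) < a-1 by linarith) hr₁0]
  have hBm : 0 ≤ b*r₁ - 2*m := by linarith [mul_pos (show (0:ℝ) < b-1 by linarith) hr₁0]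
  set u := Real.sqrt (a*r₁ - 2*m) with hu_def
  set v := Real.sqrt (b*r₁ - 2*m) with hv_def
  have hu0 : 0 ≤ u := Real.sqrt_nonneg _
  have hv0 : 0 ≤ v := Real.sqrt_nonneg _
  have hu2 : u^2 = a*r₁ - 2*m := Real.sq_sqrt hAm
  have hv2 : v^2 = b*r₁ - 2*m := Real.sq_sqrt hBm
  have huv : u ≤ v := Real.sqrt_le_sqrt (by linarith [mul_pos (show (0:ℝ) < b-a by linarith) hr₁0])
  have hvle : v ≤ Real.sqrt (b*r₁) := Real.sqrt_le_sqrt (by linarith)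
  have hule : u ≤ Real.sqrt (b*r₁) := le_trans huv hvle
  have hsbr : 0 < Real.sqrt (b*r₁) := Real.sqrt_pos.mpr (by positivity)
  have hvu : (v-u)*(v+u) = (b-a)*r₁ := by linear_combination hv2 - hu2
  have hdiff : (b-a)*r₁ ≤ (v-u) * (2 * Real.sqrt (b*r₁)) := by
    have h4 : (v-u)*(v+u) ≤ (v-u)*(2 * Real.sqrt (b*r₁)) := by
      apply mul_le_mul_of_nonneg_left _ (sub_nonneg.mpr huv)
      linarith
    rw [hvu] at h4
    exact h4
  have hSb : Real.sqrt (8*m*(b*r₁-2*m)) = Real.sqrt (8*m) * v :=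
    Real.sqrt_mul (by positivity) (b*r₁-2*m)
  have hSu : Real.sqrt (8*m*(a*r₁-2*m)) = Real.sqrt (8*m) * u :=
    Real.sqrt_mul (by positivity) (a*r₁-2*m)
  have hS : Real.sqrt (8*m*(b*r₁-2*m)) - Real.sqrt (8*m*(a*r₁-2*m))
      = Real.sqrt (8*m) * (v-u) := by
    rw [hSb, hSu, ← mul_sub]
  have h8 : Real.sqrt (8*m) = 2 * Real.sqrt 2 * Real.sqrt m := by
    rw [show (8:ℝ)*m = 2^2*(2*m) by ring, Real.sqrt_mul (by positivity),
      Real.sqrt_sq (by norm_num), Real.sqrt_mul (by norm_num)]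
    ring
  have hsbr_eq : Real.sqrt (b*r₁) = Real.sqrt b * Real.sqrt r₁ := Real.sqrt_mul hb0.le _
  have hsr : Real.sqrt r₁ * Real.sqrt r₁ = r₁ := Real.mul_self_sqrt hr₁0.le
  have heq : K * Real.sqrt m * Real.sqrt r₁ * (2 * Real.sqrt (b*r₁))
      = Real.sqrt (8*m) * ((b-a)*r₁) := by
    rw [h8, hsbr_eq]
    linear_combination (2*Real.sqrt m*K*Real.sqrt b) * hsr + (2*Real.sqrt m*r₁) * hKb
  have hgeom : K * Real.sqrt m * Real.sqrt r₁ ≤ Real.sqrt (8*m) * (v-u) := by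
    have h3 : K * Real.sqrt m * Real.sqrt r₁ * (2 * Real.sqrt (b*r₁))
        ≤ (Real.sqrt (8*m) * (v-u)) * (2 * Real.sqrt (b*r₁)) := by
      calc K * Real.sqrt m * Real.sqrt r₁ * (2 * Real.sqrt (b*r₁))
          = Real.sqrt (8*m) * ((b-a)*r₁) := heq
        _ ≤ Real.sqrt (8*m) * ((v-u) * (2 * Real.sqrt (b*r₁))) :=
            mul_le_mul_of_nonneg_left hdiff (Real.sqrt_nonneg _)
        _ = (Real.sqrt (8*m) * (v-u)) * (2 * Real.sqrt (b*r₁)) := by ring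
    exact le_of_mul_le_mul_right h3 (by positivity)
  -- conclude
  have hms : Real.sqrt m = m ^ ((1:ℝ)/2) := Real.sqrt_eq_rpow m
  have hrs : Real.sqrt r₁ = r₁ ^ ((1:ℝ)/2) := Real.sqrt_eq_rpow r₁
  have hsplit : r₁ ^ ((1:ℝ)/2) = r₁ ^ ((1-2*α)/2) * r₁ ^ α := by
    rw [← Real.rpow_add hr₁0]; congr 1; ring
  have hcr : (c*r₁) ^ α = c ^ α * r₁ ^ α := Real.mul_rpow hc.le hr₁0.le
  have hra : 0 < r₁ ^ α := Real.rpow_pos_of_pos hr₁0 α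
  rw [hS, hcr]
  have hkey2 : 2*γ*c^α * r₁^α ≤ Real.sqrt (8*m) * (v-u) := by
    calc 2*γ*c^α * r₁^α ≤ K * m ^ ((1:ℝ)/2) * r₁ ^ ((1-2*α)/2) * r₁ ^ α :=
          mul_le_mul_of_nonneg_right key hra.le
      _ = K * Real.sqrt m * Real.sqrt r₁ := by rw [hms, hrs, hsplit]; ring
      _ ≤ Real.sqrt (8*m) * (v-u) := hgeom
  linarith [hkey2, mul_pos (mul_pos hγ hca) hra]
end

section
/- Let n = 4, α < 0, γ > 0, 1 < a < b, c > 0. There exists a constant C = C(γ, α, a, b, c) > 0 such that for every m > 0, if r₁ ≥ max(C·m^{1/(2α)}, √(2m)), then γ·(c·r₁)^α < S_m(b·r₁) − S_m(a·r₁), where S_m(r) = √(2m)·log(r/√(2m) + √(r²/(2m) − 1)). -/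
private lemma schwarzschild4_aux (a b r s : ℝ) (ha : a ≠ 0) (hs : s ≠ 0) :
    (b - a) / (2 * a) * (2 * (a * r / s)) = b * r / s - a * r / s := by
  field_simp

set_option maxHeartbeats 1000000 in
/-- `n = 4` threshold radius lemma: for `α < 0`, `γ > 0`, `1 < a < b`, `c > 0`,
there is `C = C(γ,α,a,b,c) > 0` such that for every `m > 0`, if
`r₁ ≥ max(C·m^{1/(2α)}, √(2m))` then `γ(cr₁)^α < S_m(br₁) − S_m(ar₁)`,
where `S_m(r) = √(2m)·log(r/√(2m) + √(r²/(2m) − 1))`. -/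
theorem schwarzschild4_threshold (α γ a b c : ℝ) (hα : α < 0) (hγ : 0 < γ)
    (ha : 1 < a) (hab : a < b) (hc : 0 < c) :
    ∃ C > 0, ∀ m > 0, ∀ r₁ : ℝ,
      max (C * m ^ (1 / (2 * α))) (Real.sqrt (2 * m)) ≤ r₁ →
      γ * (c * r₁) ^ α <
        Real.sqrt (2 * m) *
            Real.log ((b * r₁) / Real.sqrt (2 * m) + Real.sqrt ((b * r₁) ^ 2 / (2 * m) - 1)) -
          Real.sqrt (2 * m) *
            Real.log ((a * r₁) / Real.sqrt (2 * m) + Real.sqrt ((a * r₁) ^ 2 / (2 * m) - 1)) := by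
  have ha0 : (0 : ℝ) < a := lt_trans one_pos ha
  have hb1 : 1 < b := ha.trans hab
  set q : ℝ := (b - a) / (2 * a) with hq
  have hq0 : 0 < q := div_pos (by linarith) (by linarith)
  set K : ℝ := Real.log (1 + q) with hKdef
  have hKpos : 0 < K := Real.log_pos (by linarith)
  clear_value K q
  have hcα : 0 < c ^ α := Real.rpow_pos_of_pos hc α
  have hγc : 0 < γ * c ^ α := mul_pos hγ hcα
  have hdiv : 0 < K / (γ * c ^ α) := div_pos hKpos hγc
  refine ⟨(K / (γ * c ^ α)) ^ (1 / α), Real.rpow_pos_of_pos hdiv _, ?_⟩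
  intro m hm r₁ hr₁
  set C : ℝ := (K / (γ * c ^ α)) ^ (1 / α) with hC
  have hCpos : 0 < C := Real.rpow_pos_of_pos hdiv _
  have hα' : α ≠ 0 := ne_of_lt hα
  have hCα : C ^ α = K / (γ * c ^ α) := by
    rw [hC, ← Real.rpow_mul hdiv.le, one_div_mul_cancel hα', Real.rpow_one]
  clear_value C
  set s : ℝ := Real.sqrt (2 * m) with hs
  have h2m : (0 : ℝ) < 2 * m := by linarith
  have hspos : 0 < s := Real.sqrt_pos.mpr h2m
  have hs2 : s ^ 2 = 2 * m := Real.sq_sqrt h2m.le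
  clear_value s
  have hr1s : s ≤ r₁ := le_trans (le_max_right _ _) hr₁
  have hmp : 0 < m ^ (1 / (2 * α)) := Real.rpow_pos_of_pos hm _
  have hmC : C * m ^ (1 / (2 * α)) ≤ r₁ := le_trans (le_max_left _ _) hr₁
  have hr1pos : 0 < r₁ := lt_of_lt_of_le (mul_pos hCpos hmp) hmC
  set A : ℝ := a * r₁ / s with hA
  set B : ℝ := b * r₁ / s with hB
  have hrs1 : 1 ≤ r₁ / s := (one_le_div hspos).mpr hr1s
  have hAge : a ≤ A := by
    rw [hA, mul_div_assoc]
    have h := mul_le_mul_of_nonneg_left hrs1 ha0.le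
    linarith
  have hBge : b ≤ B := by
    rw [hB, mul_div_assoc]
    have h := mul_le_mul_of_nonneg_left hrs1 (by linarith : (0:ℝ) ≤ b)
    linarith
  have hApos : 0 < A := lt_of_lt_of_le ha0 hAge
  have hBpos : 0 < B := lt_of_lt_of_le (by linarith : (0:ℝ) < b) hBge
  have hAB : A ≤ B := by
    have h' : a * r₁ ≤ b * r₁ := mul_le_mul_of_nonneg_right hab.le hr1pos.le
    rw [hA, hB]
    exact div_le_div_of_nonneg_right h' hspos.le
  -- rewrite the square roots
  have hArw : (a * r₁) ^ 2 / (2 * m) - 1 = A ^ 2 - 1 := by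
    rw [hA, div_pow, hs2]
  have hBrw : (b * r₁) ^ 2 / (2 * m) - 1 = B ^ 2 - 1 := by
    rw [hB, div_pow, hs2]
  set x : ℝ := Real.sqrt (A ^ 2 - 1) with hx
  set y : ℝ := Real.sqrt (B ^ 2 - 1) with hy
  clear_value A B x y
  have hxA : x ≤ A := by
    rw [hx]
    calc Real.sqrt (A ^ 2 - 1) ≤ Real.sqrt (A ^ 2) := Real.sqrt_le_sqrt (by linarith)
    _ = A := Real.sqrt_sq hApos.le
  have hxy : x ≤ y := by
    rw [hx, hy]
    have h := pow_le_pow_left₀ hApos.le hAB 2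
    exact Real.sqrt_le_sqrt (by linarith)
  have hx0 : 0 ≤ x := by rw [hx]; exact Real.sqrt_nonneg _
  have hy0 : 0 ≤ y := by rw [hy]; exact Real.sqrt_nonneg _
  -- key multiplicative inequality
  have h2A : q * (2 * A) = B - A := by
    rw [hq, hA, hB]; exact schwarzschild4_aux a b r₁ s (ne_of_gt ha0) (ne_of_gt hspos)
  have hmul : q * (A + x) ≤ q * (2 * A) :=
    mul_le_mul_of_nonneg_left (by linarith : A + x ≤ 2 * A) hq0.le
  have hexp : (1 + q) * (A + x) = A + x + q * (A + x) := by ring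
  have hmain : (1 + q) * (A + x) ≤ B + y := by linarith
  have hAxpos : 0 < A + x := by linarith
  have hBypos : 0 < B + y := by linarith
  -- log inequality
  have hlog : K + Real.log (A + x) ≤ Real.log (B + y) := by
    rw [hKdef, ← Real.log_mul (by linarith) (ne_of_gt hAxpos)]
    exact Real.log_le_log (by positivity) hmain
  -- bound LHS
  have hrbound : r₁ ^ α ≤ C ^ α * Real.sqrt m := by
    have h1 : r₁ ^ α ≤ (C * m ^ (1 / (2 * α))) ^ α :=
      Real.rpow_le_rpow_of_nonpos (mul_pos hCpos hmp) hmC hα.le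
    have h2 : (C * m ^ (1 / (2 * α))) ^ α = C ^ α * Real.sqrt m := by
      rw [Real.mul_rpow hCpos.le hmp.le, ← Real.rpow_mul hm.le]
      have : 1 / (2 * α) * α = 1 / 2 := by field_simp
      rw [this, ← Real.sqrt_eq_rpow]
    rw [← h2]; exact h1
  have hsqm : 0 < Real.sqrt m := Real.sqrt_pos.mpr hm
  have hLHS : γ * (c * r₁) ^ α ≤ K * Real.sqrt m := by
    rw [Real.mul_rpow hc.le hr1pos.le]
    calc γ * (c ^ α * r₁ ^ α) ≤ γ * (c ^ α * (C ^ α * Real.sqrt m)) := by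
          apply mul_le_mul_of_nonneg_left _ hγ.le
          exact mul_le_mul_of_nonneg_left hrbound hcα.le
      _ = γ * c ^ α * (K / (γ * c ^ α)) * Real.sqrt m := by rw [hCα]; ring
      _ = K * Real.sqrt m := by rw [mul_div_cancel₀ _ (ne_of_gt hγc)]
  -- assemble
  have hsrw : s = Real.sqrt 2 * Real.sqrt m := by
    rw [hs, Real.sqrt_mul (by norm_num)]
  have hsqrt2 : (1 : ℝ) < Real.sqrt 2 := by
    rw [show (1:ℝ) = Real.sqrt 1 by simp]
    exact Real.sqrt_lt_sqrt (by norm_num) (by norm_num)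
  have hRHS : s * K ≤ s * Real.log (B + y) - s * Real.log (A + x) := by
    rw [← mul_sub]
    exact mul_le_mul_of_nonneg_left (by linarith) hspos.le
  have hmid : K * Real.sqrt m < s * K := by
    rw [hsrw]
    have h0 : 0 < Real.sqrt m * K := mul_pos hsqm hKpos
    calc K * Real.sqrt m = 1 * (Real.sqrt m * K) := by ring
      _ < Real.sqrt 2 * (Real.sqrt m * K) := mul_lt_mul_of_pos_right hsqrt2 h0
      _ = Real.sqrt 2 * Real.sqrt m * K := by ring
  rw [hArw, hBrw, ← hx, ← hy]
  calc γ * (c * r₁) ^ α ≤ K * Real.sqrt m := hLHS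
    _ < s * K := hmid
    _ ≤ s * Real.log (B + y) - s * Real.log (A + x) := hRHS
end

section
/- Let n = 3. Let Y solve Y'(h) = c₃·[ (1/2)·(Y(h)/ω₂)^{1/2} − 1 ]^{3/2} with Y(0) = 2·4·ω₂ = 8ω₂, where c₃ = 4ω₂·(2/(3√3)). Then Y exists for all h ≥ 0, and there exists a constant C > 0 such that h ≤ C·Y(h)^{1/4} for all h ≥ 0. -/
/-!
Writing `Y = 4ω(1 + v²)²` with `v > 0` turns `(1/2)(Y/ω)^{1/2} - 1` into `v²`, so the equation
`Y' = 4ωκ ((1/2)(Y/ω)^{1/2} - 1)^{3/2}` becomes `(1 + v⁻²) v' = κ/4`: the quantity `v - v⁻¹` grows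
linearly in `h`. Inverting `v ↦ v - v⁻¹` on `(0, ∞)` gives an explicit global solution, and then
`h ≲ 1 + v ≲ (1 + v²)^{1/2} ≍ Y^{1/4}`. Here `ω = 4π`, `κ = 2/(3√3)`, and `Y(0) = 8ω` means `v(0)² = √2 - 1`.
-/

open Real

noncomputable def posRoot (t : ℝ) : ℝ := (t + √(t ^ 2 + 4)) / 2

lemma le_posRoot (t : ℝ) : t ≤ posRoot t := by
  have : t ≤ √(t ^ 2 + 4) := (le_abs_self t).trans <| by
    rw [← sqrt_sq_eq_abs]; exact sqrt_le_sqrt (by linarith)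
  unfold posRoot; linarith

lemma posRoot_pos (t : ℝ) : 0 < posRoot t := by
  have : -t < √(t ^ 2 + 4) := (neg_le_abs t).trans_lt <| by
    rw [← sqrt_sq_eq_abs]; exact sqrt_lt_sqrt (sq_nonneg t) (by linarith)
  unfold posRoot; linarith

lemma posRoot_sub_inv_posRoot (t : ℝ) : posRoot t - (posRoot t)⁻¹ = t := by
  have hv := (posRoot_pos t).ne'
  have hs : √(t ^ 2 + 4) ^ 2 = t ^ 2 + 4 := sq_sqrt (by positivity)
  field_simp
  unfold posRoot
  linear_combination hs / 4

lemma posRoot_sub_inv {v : ℝ} (hv : 0 < v) : posRoot (v - v⁻¹) = v := by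
  have : √((v - v⁻¹) ^ 2 + 4) = v + v⁻¹ := by
    rw [show (v - v⁻¹) ^ 2 + 4 = (v + v⁻¹) ^ 2 by field_simp; ring, sqrt_sq (by positivity)]
  rw [posRoot, this]; ring

lemma hasDerivAt_posRoot (t : ℝ) :
    HasDerivAt posRoot (posRoot t ^ 2 / (1 + posRoot t ^ 2)) t := by
  have hv := (posRoot_pos t).ne'
  have hg : HasDerivAt (fun w => w - w⁻¹) (1 + (posRoot t ^ 2)⁻¹) (posRoot t) := by
    simpa using (hasDerivAt_id' _).fun_sub (hasDerivAt_inv hv)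
  refine (hg.of_local_left_inverse (g := posRoot) (by unfold posRoot; fun_prop) (by positivity)
    (.of_forall posRoot_sub_inv_posRoot)).congr_deriv ?_
  field_simp
  ring

section

variable {ω κ t₀ : ℝ}

noncomputable def odeSolution (ω κ t₀ h : ℝ) : ℝ :=
  4 * ω * (1 + posRoot (κ * h / 4 + t₀) ^ 2) ^ 2

lemma bracket_rpow_eq (hω : ω ≠ 0) {v : ℝ} (hv : 0 ≤ v) :
    ((1 / 2) * (4 * ω * (1 + v ^ 2) ^ 2 / ω) ^ ((1 : ℝ) / 2) - 1) ^ ((3 : ℝ) / 2) = v ^ 3 := by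
  have hsqrt : (4 * ω * (1 + v ^ 2) ^ 2 / ω) ^ ((1 : ℝ) / 2) = 2 * (1 + v ^ 2) := by
    rw [← sqrt_eq_rpow, show 4 * ω * (1 + v ^ 2) ^ 2 / ω = (2 * (1 + v ^ 2)) ^ 2 by field_simp; ring,
      sqrt_sq (by positivity)]
  rw [hsqrt, show 1 / 2 * (2 * (1 + v ^ 2)) - 1 = v ^ 2 by ring, ← rpow_natCast, ← rpow_mul hv]
  norm_num

lemma odeSolution_zero {v₀ : ℝ} (hv₀ : 0 < v₀) :
    odeSolution ω κ (v₀ - v₀⁻¹) 0 = 4 * ω * (1 + v₀ ^ 2) ^ 2 := by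
  simp [odeSolution, posRoot_sub_inv hv₀]

lemma hasDerivAt_odeSolution (hω : ω ≠ 0) (h : ℝ) :
    HasDerivAt (odeSolution ω κ t₀)
      (4 * ω * κ * ((1 / 2) * (odeSolution ω κ t₀ h / ω) ^ ((1 : ℝ) / 2) - 1) ^ ((3 : ℝ) / 2)) h := by
  unfold odeSolution
  rw [bracket_rpow_eq hω (posRoot_pos _).le]
  have hv : HasDerivAt (fun x => posRoot (κ * x / 4 + t₀))
      (posRoot (κ * h / 4 + t₀) ^ 2 / (1 + posRoot (κ * h / 4 + t₀) ^ 2) * (κ / 4)) h :=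
    (hasDerivAt_posRoot _).comp h <| by
      simpa using ((hasDerivAt_id' h).const_mul κ |>.div_const 4).add_const t₀
  refine ((((hv.fun_pow 2).const_add 1).fun_pow 2).const_mul (4 * ω)).congr_deriv ?_
  field_simp
  ring

lemma odeSolution_rpow_quarter (hω : 0 ≤ ω) (h : ℝ) :
    odeSolution ω κ t₀ h ^ ((1 : ℝ) / 4) =
      (4 * ω) ^ ((1 : ℝ) / 4) * √(1 + posRoot (κ * h / 4 + t₀) ^ 2) := by
  rw [odeSolution, mul_rpow (by positivity) (by positivity), sqrt_eq_rpow, ← rpow_natCast,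
    ← rpow_mul (by positivity)]
  norm_num

lemma le_mul_odeSolution_rpow_quarter (hω : 0 < ω) (hκ : 0 < κ) :
    ∃ C > 0, ∀ h : ℝ, h ≤ C * odeSolution ω κ t₀ h ^ ((1 : ℝ) / 4) := by
  refine ⟨4 * (1 + |t₀|) / κ / (4 * ω) ^ ((1 : ℝ) / 4), by positivity, fun h => ?_⟩
  rw [odeSolution_rpow_quarter hω.le]
  set v := posRoot (κ * h / 4 + t₀)
  have hv : κ * h / 4 + t₀ ≤ v := le_posRoot _
  have hs₁ : 1 ≤ √(1 + v ^ 2) := one_le_sqrt.mpr (by nlinarith)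
  have hs_v : v ≤ √(1 + v ^ 2) := le_sqrt_of_sq_le (by linarith)
  have : κ * h / 4 ≤ (1 + |t₀|) * √(1 + v ^ 2) := by
    nlinarith [neg_le_abs t₀, abs_nonneg t₀]
  have hω₄ : 0 < (4 * ω) ^ ((1 : ℝ) / 4) := by positivity
  field_simp
  linarith

end

/-- `n = 3` global existence and growth bound: the solution of
`Y' = c₃·[(1/2)(Y/ω₂)^{1/2} − 1]^{3/2}` with `Y(0) = 8ω₂`, `c₃ = 4ω₂·(2/(3√3))`,
`ω₂ = 4π`, exists for all `h ≥ 0` and satisfies `h ≤ C·Y(h)^{1/4}` for some `C > 0`. -/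
theorem ode_global_dim_three :
    ∃ Y : ℝ → ℝ,
      Y 0 = 8 * (4 * π) ∧
      (∀ h : ℝ, 0 ≤ h →
        HasDerivAt Y
          ((4 * (4 * π) * (2 / (3 * Real.sqrt 3))) *
            ((1 / 2) * (Y h / (4 * π)) ^ ((1 : ℝ) / 2) - 1) ^ ((3 : ℝ) / 2)) h) ∧
      ∃ C > 0, ∀ h : ℝ, 0 ≤ h → h ≤ C * (Y h) ^ ((1 : ℝ) / 4) := by
  obtain ⟨v₀, hv₀, hv₀_sq⟩ : ∃ v₀ : ℝ, 0 < v₀ ∧ v₀ ^ 2 = √2 - 1 :=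
    ⟨√(√2 - 1), sqrt_pos.mpr (by linarith [one_lt_sqrt_two]),
      sq_sqrt (by linarith [one_lt_sqrt_two])⟩
  have hω : 0 < 4 * π := by positivity
  obtain ⟨C, hC, hle⟩ := le_mul_odeSolution_rpow_quarter (t₀ := v₀ - v₀⁻¹) hω
    (show 0 < 2 / (3 * √3) by positivity)
  refine ⟨odeSolution (4 * π) (2 / (3 * √3)) (v₀ - v₀⁻¹), ?_,
    fun h _ => hasDerivAt_odeSolution hω.ne' h, C, hC, fun h _ => hle h⟩
  rw [odeSolution_zero hv₀, hv₀_sq, add_sub_cancel, sq_sqrt zero_le_two]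
  ring
end

section
/- Let n = 4. Let Y solve Y'(h) = c₄·[ (1/2)·(Y(h)/ω₃)^{2/3} − 1 ]^{3/2} with Y(0) = 2·2^{3/2}·ω₃, where c₄ = 6ω₃·(2/(3√3)). Then Y exists for all h ≥ 0, and there exists a constant C > 0 such that h ≤ C·log(Y(h)) for all h ≥ 0. -/
/-!
Writing `ω = ω₃` and `K = 2^{3/2} ω`, the substitution `Y = K cosh³ u` turns the bracket
`(1/2)(Y/ω)^{2/3} - 1` into `sinh² u`, so the equation becomes the separable `u' = α tanh² u`
with `α = c₄ / (3K)`. Since `x ↦ x - coth x` is an antiderivative of `coth²` and an increasing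
bijection `(0, ∞) → ℝ`, the solution is `u(h) = (x - coth x)⁻¹(α h + β)`, global in `h`,
with `β` chosen so that `cosh³ u(0) = 2`. As `coth > 0` we get `u(h) ≥ α h + β`, hence
`log Y(h) ≥ 3 α h - O(1)`, while `log Y ≥ log K > 0`; together these give `h ≤ C log Y(h)`.
-/

open Real Filter Topology Set

noncomputable def xSubCoth (x : ℝ) : ℝ := x - cosh x / sinh x

lemma hasDerivAt_xSubCoth {x : ℝ} (hx : x ≠ 0) :
    HasDerivAt xSubCoth (cosh x ^ 2 / sinh x ^ 2) x := by
  have hs : sinh x ≠ 0 := sinh_ne_zero.2 hx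
  refine ((hasDerivAt_id x).sub ((hasDerivAt_cosh x).div (hasDerivAt_sinh x) hs)).congr_deriv ?_
  field_simp
  ring

lemma continuousOn_xSubCoth : ContinuousOn xSubCoth (Ioi 0) :=
  fun _ hx ↦ (hasDerivAt_xSubCoth (ne_of_gt hx)).continuousAt.continuousWithinAt

lemma strictMonoOn_xSubCoth : StrictMonoOn xSubCoth (Ioi 0) := by
  refine strictMonoOn_of_deriv_pos (convex_Ioi 0) continuousOn_xSubCoth fun x hx ↦ ?_
  rw [interior_Ioi] at hx
  rw [(hasDerivAt_xSubCoth (ne_of_gt hx)).deriv]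
  have := sinh_pos_iff.2 hx
  positivity

lemma cosh_div_sinh_le_one_add_inv {x : ℝ} (hx : 0 < x) : cosh x / sinh x ≤ 1 + x⁻¹ := by
  have hs : 0 < sinh x := sinh_pos_iff.2 hx
  have hxs : x ≤ sinh x := self_le_sinh_iff.2 hx.le
  have hcs : cosh x - sinh x ≤ 1 := by
    rw [cosh_sub_sinh]
    exact exp_le_one_iff.2 (by linarith)
  have : 1 ≤ sinh x / x := (one_le_div hx).2 hxs
  rw [div_le_iff₀ hs, add_mul, one_mul, ← div_eq_inv_mul]
  linarith

lemma tendsto_xSubCoth_nhdsGT_zero : Tendsto xSubCoth (𝓝[>] 0) atBot := by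
  have hsinh : Tendsto sinh (𝓝[>] 0) (𝓝[>] 0) :=
    tendsto_nhdsWithin_of_tendsto_nhds_of_eventually_within _
      (by simpa using continuous_sinh.continuousWithinAt.tendsto (x := 0) (s := Ioi 0))
      (eventually_nhdsWithin_of_forall fun _ hx ↦ sinh_pos_iff.2 hx)
  have hcosh : Tendsto cosh (𝓝[>] 0) (𝓝 1) := by
    simpa using continuous_cosh.continuousWithinAt.tendsto (x := 0) (s := Ioi 0)
  have hcoth : Tendsto (fun x ↦ cosh x * (sinh x)⁻¹) (𝓝[>] 0) atTop :=
    hcosh.pos_mul_atTop one_pos (tendsto_inv_nhdsGT_zero.comp hsinh)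
  have hid : Tendsto (fun x : ℝ ↦ x) (𝓝[>] 0) (𝓝 0) := nhdsWithin_le_nhds
  refine (hid.add_atBot (tendsto_neg_atTop_atBot.comp hcoth)).congr fun x ↦ ?_
  simp only [xSubCoth, Function.comp_apply, div_eq_mul_inv, sub_eq_add_neg]

lemma tendsto_xSubCoth_atTop : Tendsto xSubCoth atTop atTop := by
  refine tendsto_atTop_mono' _ ?_ (tendsto_atTop_add_const_right _ (-2) tendsto_id)
  filter_upwards [eventually_ge_atTop 1] with x hx
  have := cosh_div_sinh_le_one_add_inv (x := x) (by linarith)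
  have : x⁻¹ ≤ 1 := inv_le_one_of_one_le₀ hx
  simp only [xSubCoth, id]
  linarith

lemma surjOn_xSubCoth : SurjOn xSubCoth (Ioi 0) univ :=
  isPreconnected_Ioi.intermediate_value_Iii (l₁ := 𝓝[>] 0) inf_le_right
    (le_principal_iff.2 (Ioi_mem_atTop 0))
    continuousOn_xSubCoth tendsto_xSubCoth_nhdsGT_zero tendsto_xSubCoth_atTop

noncomputable def xSubCothOrderIso : Ioi (0 : ℝ) ≃o ℝ :=
  StrictMono.orderIsoOfSurjective _ (strictMonoOn_iff_strictMono.1 strictMonoOn_xSubCoth)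
    (surjOn_iff_surjective.1 surjOn_xSubCoth)

noncomputable def invXSubCoth (t : ℝ) : ℝ := xSubCothOrderIso.symm t

lemma invXSubCoth_pos (t : ℝ) : 0 < invXSubCoth t := (xSubCothOrderIso.symm t).2

lemma xSubCoth_invXSubCoth (t : ℝ) : xSubCoth (invXSubCoth t) = t :=
  xSubCothOrderIso.apply_symm_apply t

lemma invXSubCoth_xSubCoth {x : ℝ} (hx : 0 < x) : invXSubCoth (xSubCoth x) = x :=
  congrArg Subtype.val (xSubCothOrderIso.symm_apply_apply ⟨x, hx⟩)

lemma continuous_invXSubCoth : Continuous invXSubCoth :=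
  continuous_subtype_val.comp xSubCothOrderIso.symm.continuous

lemma le_invXSubCoth (t : ℝ) : t ≤ invXSubCoth t := by
  have hu := invXSubCoth_pos t
  have : 0 < cosh (invXSubCoth t) / sinh (invXSubCoth t) :=
    div_pos (cosh_pos _) (sinh_pos_iff.2 hu)
  have := xSubCoth_invXSubCoth t
  rw [xSubCoth] at this
  linarith

lemma hasDerivAt_invXSubCoth (t : ℝ) :
    HasDerivAt invXSubCoth (tanh (invXSubCoth t) ^ 2) t := by
  have hu := invXSubCoth_pos t
  have hs : sinh (invXSubCoth t) ≠ 0 := (sinh_pos_iff.2 hu).ne'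
  have h := HasDerivAt.of_local_left_inverse continuous_invXSubCoth.continuousAt
    (hasDerivAt_xSubCoth hu.ne') (by positivity) (Eventually.of_forall xSubCoth_invXSubCoth)
  rwa [inv_div, ← div_pow, ← tanh_eq_sinh_div_cosh] at h

noncomputable def coshCubeSolution (K α β h : ℝ) : ℝ :=
  K * cosh (invXSubCoth (α * h + β)) ^ 3

lemma hasDerivAt_coshCubeSolution (K α β h : ℝ) :
    HasDerivAt (coshCubeSolution K α β)
      (3 * K * α * sinh (invXSubCoth (α * h + β)) ^ 3) h := by
  set u := invXSubCoth (α * h + β)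
  have hc : cosh u ≠ 0 := (cosh_pos u).ne'
  have hu : HasDerivAt (fun h ↦ invXSubCoth (α * h + β)) (tanh u ^ 2 * α) h :=
    (hasDerivAt_invXSubCoth _).comp h
      ((((hasDerivAt_id h).const_mul α).add_const β).congr_deriv (mul_one α))
  refine ((hu.cosh.pow 3).const_mul K).congr_deriv ?_
  rw [tanh_eq_sinh_div_cosh]
  field_simp
  ring

lemma sq_rpow_three_halves {a : ℝ} (ha : 0 ≤ a) : (a ^ 2) ^ ((3 : ℝ) / 2) = a ^ 3 := by
  rw [← rpow_natCast, ← rpow_mul ha, ← rpow_natCast]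
  norm_num

lemma rpow_three_halves_mul_pow_three_rpow {a b : ℝ} (ha : 0 ≤ a) (hb : 0 ≤ b) :
    (b ^ ((3 : ℝ) / 2) * a ^ 3) ^ ((2 : ℝ) / 3) = b * a ^ 2 := by
  rw [← sq_rpow_three_halves ha, ← mul_rpow hb (by positivity), ← rpow_mul (by positivity)]
  norm_num

lemma half_rpow_sub_one_rpow_eq_sinh_pow {u : ℝ} (hu : 0 ≤ u) :
    ((1 / 2) * (2 ^ ((3 : ℝ) / 2) * cosh u ^ 3) ^ ((2 : ℝ) / 3) - 1) ^ ((3 : ℝ) / 2) =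
      sinh u ^ 3 := by
  rw [rpow_three_halves_mul_pow_three_rpow (cosh_pos u).le zero_le_two, cosh_sq,
    show (1 / 2 : ℝ) * (2 * (sinh u ^ 2 + 1)) - 1 = sinh u ^ 2 by ring,
    sq_rpow_three_halves (sinh_nonneg_iff.2 hu)]

lemma add_mul_le_log_mul_cosh_pow {K : ℝ} (hK : 0 < K) (n : ℕ) (u : ℝ) :
    n * u + log (K / 2 ^ n) ≤ log (K * cosh u ^ n) := by
  have hexp : exp u / 2 ≤ cosh u := by
    rw [cosh_eq]
    linarith [exp_pos (-u)]
  calc n * u + log (K / 2 ^ n) = log (K / 2 ^ n * exp u ^ n) := by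
        rw [log_mul (by positivity) (by positivity), ← exp_nat_mul, log_exp, add_comm]
    _ = log (K * (exp u / 2) ^ n) := by rw [div_pow]; ring_nf
    _ ≤ log (K * cosh u ^ n) := by gcongr

lemma le_mul_of_affine_le {a b m L h : ℝ} (ha : 0 < a) (hm : 0 < m) (hmL : m ≤ L)
    (hL : a * h + b ≤ L) : h ≤ (1 + |b| / m) / a * L := by
  have hb : |b| ≤ |b| / m * L := by
    calc |b| = |b| / m * m := (div_mul_cancel₀ _ hm.ne').symm
      _ ≤ |b| / m * L := by gcongr
  rw [div_mul_eq_mul_div, le_div_iff₀ ha]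
  nlinarith [neg_abs_le b]

/-- `n = 4` global existence and growth bound: the solution of
`Y' = c₄·[(1/2)(Y/ω₃)^{2/3} − 1]^{3/2}` with `Y(0) = 2·2^{3/2}·ω₃`,
`c₄ = 6ω₃·(2/(3√3))`, `ω₃ = 2π²`, exists for all `h ≥ 0` and satisfies
`h ≤ C·log(Y(h))` for some `C > 0`. -/
theorem ode_global_dim_four :
    ∃ Y : ℝ → ℝ,
      Y 0 = 2 * 2 ^ ((3 : ℝ) / 2) * (2 * π ^ 2) ∧
      (∀ h : ℝ, 0 ≤ h →
        HasDerivAt Y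
          ((6 * (2 * π ^ 2) * (2 / (3 * Real.sqrt 3))) *
            ((1 / 2) * (Y h / (2 * π ^ 2)) ^ ((2 : ℝ) / 3) - 1) ^ ((3 : ℝ) / 2)) h) ∧
      ∃ C > 0, ∀ h : ℝ, 0 ≤ h → h ≤ C * Real.log (Y h) := by
  set ω : ℝ := 2 * π ^ 2
  set K : ℝ := 2 ^ ((3 : ℝ) / 2) * ω
  set α : ℝ := 6 * ω * (2 / (3 * √3)) / (3 * K)
  have hω : 1 < ω := by nlinarith [pi_gt_three]
  have hK : 1 < K := one_lt_mul_of_le_of_lt (one_le_rpow one_le_two (by norm_num)) hω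
  have hcube : 1 < (2 : ℝ) ^ ((1 : ℝ) / 3) := one_lt_rpow one_lt_two (by norm_num)
  set u₀ := arcosh (2 ^ ((1 : ℝ) / 3))
  have hu₀ : 0 < u₀ := arcosh_pos hcube
  set β := xSubCoth u₀
  refine ⟨coshCubeSolution K α β, ?_, fun h _ ↦ ?_, ?_⟩
  · rw [coshCubeSolution, mul_zero, zero_add, invXSubCoth_xSubCoth hu₀, cosh_arcosh hcube.le,
      ← rpow_natCast, ← rpow_mul zero_le_two]
    norm_num
    ring
  · have hY : coshCubeSolution K α β h / ω =
        2 ^ ((3 : ℝ) / 2) * cosh (invXSubCoth (α * h + β)) ^ 3 := by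
      simp only [coshCubeSolution, K]
      field_simp
    rw [hY, half_rpow_sub_one_rpow_eq_sinh_pow (invXSubCoth_pos _).le]
    convert hasDerivAt_coshCubeSolution K α β h using 1
    simp only [α]
    field_simp
  · have hlogK : 0 < log K := log_pos hK
    have h3α : 0 < 3 * α := by positivity
    refine ⟨(1 + |3 * β + log (K / 2 ^ 3)| / log K) / (3 * α), by positivity, fun h _ ↦
      le_mul_of_affine_le h3α hlogK ?_ ?_⟩
    · exact log_le_log (by positivity)
        (le_mul_of_one_le_right (by positivity) (one_le_pow₀ (one_le_cosh _)))
    · have hu := le_invXSubCoth (α * h + β)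
      have := add_mul_le_log_mul_cosh_pow (by positivity : 0 < K) 3 (invXSubCoth (α * h + β))
      push_cast at this
      simp only [coshCubeSolution]
      linarith
end
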